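/- arXiv:1009.5887 — 3 statements merged into one kernel-verified Lean document; each statement's English description precedes it below -/
import Mathlib

section
/- Let φ : Σ_A⁺ → ℝ be continuous with φ(x) > 0 for all x. Then the diagonal operator K on ℓ²(W*) defined by (Kξ)(w) = e^{−φ^{|w|}(w x^{t(w)})} ξ(w) is a compact operator. -/
/-!
A continuous positive function `φ` on the compact space `Σ_A⁺` is bounded below by some
`c > 0`, so `φ^{|w|} ≥ c |w|`. Since there are only finitely many words of each length, the
diagonal entries `e^{-φ^{|w|}(w x^{t(w)})}` tend to `0` along the cofinite filter on `W*`. A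
diagonal operator on `ℓ^p` whose entries tend to `0` is the sum, in operator norm, of its
rank-one coordinate pieces, and is therefore compact.
-/

open scoped BigOperators Classical
open Filter Topology MeasureTheory

namespace SpectralGibbs

/-- The one-sided shift space `Σ_A⁺` determined by a `k × k` zero-one matrix `A`. -/
abbrev ShiftSpace (k : ℕ) (A : Matrix (Fin k) (Fin k) ℕ) : Type :=
  {x : ℕ → Fin k // ∀ m : ℕ, A (x m) (x (m + 1)) = 1}

/-- `A` has entries in `{0,1}`. -/
def ZeroOne (k : ℕ) (A : Matrix (Fin k) (Fin k) ℕ) : Prop :=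
  ∀ i j : Fin k, A i j = 0 ∨ A i j = 1

/-- `A` is aperiodic: some power of `A` has all entries positive. -/
def Aperiodic (k : ℕ) (A : Matrix (Fin k) (Fin k) ℕ) : Prop :=
  ∃ n : ℕ, 1 ≤ n ∧ ∀ i j : Fin k, 0 < (A ^ n) i j

/-- The shift map `σ`. -/
def shift (k : ℕ) (A : Matrix (Fin k) (Fin k) ℕ) :
    ShiftSpace k A → ShiftSpace k A :=
  fun x => ⟨fun m => x.1 (m + 1), fun m => x.2 (m + 1)⟩

/-- The metric `d(x,y) = 2^{-min{m : x_m ≠ y_m}}` for `x ≠ y` (and `0` for `x = y`). -/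
noncomputable def dist' (k : ℕ) (A : Matrix (Fin k) (Fin k) ℕ)
    (x y : ShiftSpace k A) : ℝ :=
  if x = y then 0 else (2 : ℝ)⁻¹ ^ sInf {m : ℕ | x.1 m ≠ y.1 m}

/-- `f` is `α`-Hölder: `sup_{x ≠ y} ‖f x - f y‖ / d(x,y)^α < ∞`. -/
def IsHolder {E : Type*} [NormedAddCommGroup E] (k : ℕ) (A : Matrix (Fin k) (Fin k) ℕ)
    (α : ℝ) (f : ShiftSpace k A → E) : Prop :=
  ∃ C : ℝ, ∀ x y : ShiftSpace k A, ‖f x - f y‖ ≤ C * dist' k A x y ^ α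

/-- The sequence `ix` obtained by prepending the symbol `i` to a sequence `x`. -/
def consSeq (k : ℕ) (i : Fin k) (x : ℕ → Fin k) : ℕ → Fin k
  | 0 => i
  | m + 1 => x m

/-- The point `ix ∈ Σ_A⁺`, defined whenever `A(i, x_0) = 1`. -/
def cons (k : ℕ) (A : Matrix (Fin k) (Fin k) ℕ) (i : Fin k) (x : ShiftSpace k A)
    (h : A i (x.1 0) = 1) : ShiftSpace k A :=
  ⟨consSeq k i x.1, by
    intro m
    match m with
    | 0 => exact h
    | m + 1 => exact x.2 m⟩

/-- The transfer operator `(L_ψ g)(x) = Σ_{σ y = x} e^{ψ(y)} g(y)`. -/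
noncomputable def transfer {E : Type*} [AddCommMonoid E] [SMul ℝ E]
    (k : ℕ) (A : Matrix (Fin k) (Fin k) ℕ)
    (ψ : ShiftSpace k A → ℝ) (g : ShiftSpace k A → E) (x : ShiftSpace k A) : E :=
  ∑ i : Fin k,
    if h : A i (x.1 0) = 1 then Real.exp (ψ (cons k A i x h)) • g (cons k A i x h) else 0

/-- `-φ` is normalized: `Σ_{σ y = x} e^{-φ(y)} = 1` for all `x`. -/
def NormalizedNeg (k : ℕ) (A : Matrix (Fin k) (Fin k) ℕ) (φ : ShiftSpace k A → ℝ) : Prop :=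
  ∀ x : ShiftSpace k A, transfer k A (fun y => -φ y) (fun _ => (1 : ℝ)) x = 1

/-- Birkhoff sum `φ^n = φ + φ∘σ + ⋯ + φ∘σ^{n-1}`. -/
noncomputable def birk (k : ℕ) (A : Matrix (Fin k) (Fin k) ℕ)
    (φ : ShiftSpace k A → ℝ) (n : ℕ) (x : ShiftSpace k A) : ℝ :=
  ∑ i ∈ Finset.range n, φ ((shift k A)^[i] x)

/-- A word `w = (w_1, …, w_{n+1})` (of length `n+1 ≥ 1`) is allowed if consecutive
letters are compatible with `A`. -/
def Allowed (k : ℕ) (A : Matrix (Fin k) (Fin k) ℕ) {n : ℕ} (w : Fin (n + 1) → Fin k) : Prop :=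
  ∀ i : Fin n, A (w i.castSucc) (w i.succ) = 1

/-- `W*`: the set of all allowed finite words (of length `≥ 1`). -/
def Words (k : ℕ) (A : Matrix (Fin k) (Fin k) ℕ) : Type :=
  Σ n : ℕ, {w : Fin (n + 1) → Fin k // Allowed k A w}

/-- The length `|w|` of a word. -/
def wordLen (k : ℕ) (A : Matrix (Fin k) (Fin k) ℕ) (w : Words k A) : ℕ := w.1 + 1

/-- The last letter `t(w)` of a word. -/
def wordLast (k : ℕ) (A : Matrix (Fin k) (Fin k) ℕ) (w : Words k A) : Fin k :=
  w.2.1 (Fin.last w.1)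

/-- The concatenated sequence `w x`. -/
def wordSeq (k : ℕ) {n : ℕ} (w : Fin (n + 1) → Fin k) (x : ℕ → Fin k) : ℕ → Fin k :=
  fun m => if h : m < n + 1 then w ⟨m, h⟩ else x (m - (n + 1))

theorem glue_mem (k : ℕ) (A : Matrix (Fin k) (Fin k) ℕ) {n : ℕ}
    (w : Fin (n + 1) → Fin k) (hw : Allowed k A w) (x : ShiftSpace k A)
    (hx : A (w (Fin.last n)) (x.1 0) = 1) :
    ∀ m : ℕ, A (wordSeq k w x.1 m) (wordSeq k w x.1 (m + 1)) = 1 := by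
  intro m
  unfold wordSeq
  rcases lt_trichotomy (m + 1) (n + 1) with h | h | h
  · have hm : m < n + 1 := by omega
    rw [dif_pos hm, dif_pos h]
    exact hw ⟨m, by omega⟩
  · have hm : m < n + 1 := by omega
    rw [dif_pos hm, dif_neg (by omega)]
    have h0 : m + 1 - (n + 1) = 0 := by omega
    rw [h0]
    have hl : (⟨m, hm⟩ : Fin (n + 1)) = Fin.last n := by
      apply Fin.ext
      simp only [Fin.last]
      omega
    rw [hl]
    exact hx
  · rw [dif_neg (by omega), dif_neg (by omega)]
    have h1 : m + 1 - (n + 1) = (m - (n + 1)) + 1 := by omega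
    rw [h1]
    exact x.2 (m - (n + 1))

/-- The point `w x ∈ Σ_A⁺`, for an allowed word `w` and `x` with `A(t(w), x_0) = 1`. -/
def glue (k : ℕ) (A : Matrix (Fin k) (Fin k) ℕ) {n : ℕ}
    (w : Fin (n + 1) → Fin k) (hw : Allowed k A w) (x : ShiftSpace k A)
    (hx : A (w (Fin.last n)) (x.1 0) = 1) : ShiftSpace k A :=
  ⟨wordSeq k w x.1, glue_mem k A w hw x hx⟩

/-- Given a family of points `p j` with `A(j, (p j)_0) = 1`, the point `w p^{t(w)}`. -/
def wordPt (k : ℕ) (A : Matrix (Fin k) (Fin k) ℕ) {n : ℕ}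
    (w : Fin (n + 1) → Fin k) (hw : Allowed k A w)
    (p : Fin k → ShiftSpace k A) (hp : ∀ j : Fin k, A j ((p j).1 0) = 1) : ShiftSpace k A :=
  glue k A w hw (p (w (Fin.last n))) (hp _)

/-- The point `w p^{t(w)}` for `w ∈ W*`. -/
def wpt (k : ℕ) (A : Matrix (Fin k) (Fin k) ℕ)
    (p : Fin k → ShiftSpace k A) (hp : ∀ j : Fin k, A j ((p j).1 0) = 1)
    (w : Words k A) : ShiftSpace k A :=
  wordPt k A w.2.1 w.2.2 p hp

/-- The indicator function `χ_j` of the cylinder `[j] = {x : x_0 = j}`. -/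
noncomputable def cylInd (k : ℕ) (A : Matrix (Fin k) (Fin k) ℕ) (j : Fin k) :
    ShiftSpace k A → ℝ :=
  fun x => if x.1 0 = j then 1 else 0


/-- The eigenvalue family of `π(f)|D_φ|⁻¹`, indexed by `W* × {1,2}`. -/
noncomputable def eigval (k : ℕ) (A : Matrix (Fin k) (Fin k) ℕ)
    (xp : Fin k → ShiftSpace k A) (hxp : ∀ j : Fin k, A j ((xp j).1 0) = 1)
    (yp : Fin k → ShiftSpace k A) (hyp : ∀ j : Fin k, A j ((yp j).1 0) = 1)
    (zp : Fin k → ShiftSpace k A) (hzp : ∀ j : Fin k, A j ((zp j).1 0) = 1)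
    (φ f : ShiftSpace k A → ℝ) : Words k A × Fin 2 → ℝ :=
  fun p =>
    (if p.2 = 0 then f (wpt k A yp hyp p.1) else f (wpt k A zp hzp p.1)) *
      Real.exp (-(birk k A φ (wordLen k A p.1) (wpt k A xp hxp p.1)))

end SpectralGibbs

namespace lp

open scoped ENNReal

variable {𝕜 ι : Type*} [RCLike 𝕜] {p : ℝ≥0∞}

theorem norm_mul_apply_le (a : lp (fun _ : ι => 𝕜) ∞) (ξ : lp (fun _ : ι => 𝕜) p) (i : ι) :
    ‖a i * ξ i‖ ≤ ‖a‖ * ‖ξ i‖ := by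
  rw [norm_mul]
  gcongr
  exact norm_apply_le_norm ENNReal.top_ne_zero a i

theorem memℓp_mul (a : lp (fun _ : ι => 𝕜) ∞) (ξ : lp (fun _ : ι => 𝕜) p) :
    Memℓp (⇑a * ⇑ξ) p :=
  ((lp.memℓp ξ).norm.const_smul ‖a‖).mono fun i => norm_mul_apply_le a ξ i

variable [Fact (1 ≤ p)]

theorem norm_le_mul_norm_of_forall_le {f ξ : lp (fun _ : ι => 𝕜) p} {C : ℝ} (hC : 0 ≤ C)
    (h : ∀ i, ‖f i‖ ≤ C * ‖ξ i‖) : ‖f‖ ≤ C * ‖ξ‖ := by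
  have hp : p ≠ 0 := (zero_lt_one.trans_le Fact.out).ne'
  have hCξ : ∀ i, ‖((C : 𝕜) • ξ) i‖ = C * ‖ξ i‖ := fun i => by
    rw [coeFn_smul, Pi.smul_apply, norm_smul, RCLike.norm_ofReal, abs_of_nonneg hC]
  calc ‖f‖ ≤ ‖(C : 𝕜) • ξ‖ := norm_mono hp fun i => (h i).trans (hCξ i).ge
    _ = C * ‖ξ‖ := by rw [norm_smul, RCLike.norm_ofReal, abs_of_nonneg hC]

noncomputable def diagonal (a : lp (fun _ : ι => 𝕜) ∞) :
    lp (fun _ : ι => 𝕜) p →L[𝕜] lp (fun _ : ι => 𝕜) p :=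
  LinearMap.mkContinuous
    { toFun := fun ξ => ⟨⇑a * ⇑ξ, memℓp_mul a ξ⟩
      map_add' := fun ξ η => lp.ext (mul_add (⇑a) ξ η)
      map_smul' := fun c ξ => lp.ext (mul_smul_comm c (⇑a) ξ) }
    ‖a‖ fun ξ => norm_le_mul_norm_of_forall_le (norm_nonneg a) (norm_mul_apply_le a ξ)

@[simp]
theorem diagonal_apply (a : lp (fun _ : ι => 𝕜) ∞) (ξ : lp (fun _ : ι => 𝕜) p) (i : ι) :
    diagonal a ξ i = a i * ξ i :=
  rfl

noncomputable def singleProj (i : ι) : lp (fun _ : ι => 𝕜) p →L[𝕜] lp (fun _ : ι => 𝕜) p :=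
  (singleContinuousLinearMap 𝕜 (fun _ => 𝕜) p i).comp (evalCLM 𝕜 (fun _ => 𝕜) p i)

@[simp]
theorem singleProj_apply (i : ι) (ξ : lp (fun _ : ι => 𝕜) p) :
    singleProj i ξ = lp.single p i (ξ i) :=
  rfl

theorem isCompactOperator_singleProj (i : ι) :
    IsCompactOperator (singleProj i : lp (fun _ : ι => 𝕜) p →L[𝕜] _) := by
  rw [singleProj, ContinuousLinearMap.coe_comp]
  exact (isCompactOperator_of_locallyCompactSpace_dom _).clm_comp _

theorem diagonal_sub_sum_singleProj_apply (a : lp (fun _ : ι => 𝕜) ∞) (s : Finset ι)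
    (ξ : lp (fun _ : ι => 𝕜) p) (j : ι) :
    (diagonal a - ∑ i ∈ s, a i • singleProj i :
      lp (fun _ : ι => 𝕜) p →L[𝕜] lp (fun _ : ι => 𝕜) p) ξ j = if j ∈ s then 0 else a j * ξ j := by
  simp only [sub_apply, diagonal_apply, sum_apply, smul_apply,
    singleProj_apply, ← lp.single_smul, smul_eq_mul, coeFn_sub, Pi.sub_apply, coeFn_sum,
    Finset.sum_apply, lp.coeFn_single, Finset.sum_pi_single]
  split_ifs <;> simp

theorem hasSum_diagonal {a : lp (fun _ : ι => 𝕜) ∞} (ha : Tendsto (⇑a) cofinite (𝓝 0)) :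
    HasSum (fun i => a i • singleProj i) (diagonal a : lp (fun _ : ι => 𝕜) p →L[𝕜] _) := by
  rw [HasSum, SummationFilter.unconditional_filter, Metric.tendsto_atTop]
  intro ε hε
  have hsmall : {i | ¬ ‖a i‖ < ε / 2}.Finite :=
    eventually_cofinite.mp <|
      (tendsto_zero_iff_norm_tendsto_zero.mp ha).eventually (gt_mem_nhds (half_pos hε))
  refine ⟨hsmall.toFinset, fun s hs => ?_⟩
  rw [dist_comm, dist_eq_norm]
  refine lt_of_le_of_lt (ContinuousLinearMap.opNorm_le_bound _ (half_pos hε).le fun ξ =>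
    norm_le_mul_norm_of_forall_le (half_pos hε).le fun j => ?_) (half_lt_self hε)
  rw [diagonal_sub_sum_singleProj_apply]
  split_ifs with hj
  · simpa using mul_nonneg (half_pos hε).le (norm_nonneg (ξ j))
  · rw [norm_mul]
    gcongr
    exact (of_not_not fun hbig => hj (hs (hsmall.mem_toFinset.mpr hbig))).le

theorem isCompactOperator_diagonal {a : lp (fun _ : ι => 𝕜) ∞}
    (ha : Tendsto (⇑a) cofinite (𝓝 0)) :
    IsCompactOperator (diagonal a : lp (fun _ : ι => 𝕜) p →L[𝕜] _) :=
  isCompactOperator_of_tendsto (hasSum_diagonal ha) <| .of_forall fun _ =>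
    Submodule.sum_mem (compactOperator _ _ _) fun i _ =>
      (compactOperator _ _ _).smul_mem _ (isCompactOperator_singleProj i)

end lp

namespace SpectralGibbs

open scoped ENNReal

instance (k : ℕ) (A : Matrix (Fin k) (Fin k) ℕ) : CompactSpace (ShiftSpace k A) := by
  refine isCompact_iff_compactSpace.mp (IsClosed.isCompact
    (s := {x : ℕ → Fin k | ∀ m, A (x m) (x (m + 1)) = 1}) ?_)
  rw [Set.ofPred_forall]
  refine isClosed_iInter fun m => isClosed_eq ?_ continuous_const
  have hpair : Continuous fun x : ℕ → Fin k => (x m, x (m + 1)) := by fun_prop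
  exact (continuous_of_discreteTopology (f := fun q : Fin k × Fin k => A q.1 q.2)).comp hpair

theorem mul_le_birk {k : ℕ} {A : Matrix (Fin k) (Fin k) ℕ} {φ : ShiftSpace k A → ℝ} {c : ℝ}
    (hc : ∀ x, c ≤ φ x) (n : ℕ) (x : ShiftSpace k A) : n * c ≤ birk k A φ n x := by
  simpa [birk] using Finset.card_nsmul_le_sum (Finset.range n) _ c fun i _ => hc _

theorem tendsto_birk_atTop {α : Type*} {k : ℕ} {A : Matrix (Fin k) (Fin k) ℕ}
    {φ : ShiftSpace k A → ℝ} (hφc : Continuous φ) (hφpos : ∀ x, 0 < φ x) {l : Filter α}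
    {n : α → ℕ} (hn : Tendsto n l atTop) (x : α → ShiftSpace k A) :
    Tendsto (fun a => birk k A φ (n a) (x a)) l atTop := by
  obtain ⟨c, hc, hcφ⟩ := isCompact_univ.exists_forall_le' hφc.continuousOn fun x _ => hφpos x
  exact tendsto_atTop_mono (fun a => mul_le_birk (fun y => hcφ y trivial) _ _)
    ((tendsto_natCast_atTop_atTop.comp hn).atTop_mul_const hc)

theorem tendsto_wordLen_cofinite (k : ℕ) (A : Matrix (Fin k) (Fin k) ℕ) :
    Tendsto (wordLen k A) cofinite atTop := by
  have hfst : Tendsto (fun w : Words k A => w.1) cofinite atTop := by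
    rw [← Nat.cofinite_eq_atTop]
    refine Tendsto.cofinite_of_finite_preimage_singleton fun n => Set.Finite.to_subtype <|
      (Set.finite_range (Sigma.mk n : _ → Words k A)).subset ?_
    rintro ⟨m, w⟩ rfl
    exact ⟨w, rfl⟩
  exact tendsto_atTop_mono (fun w => Nat.le_succ w.1) hfst

theorem stmt1_general (k : ℕ) (A : Matrix (Fin k) (Fin k) ℕ)
    (xp : Fin k → ShiftSpace k A) (hxp : ∀ j : Fin k, A j ((xp j).1 0) = 1)
    (φ : ShiftSpace k A → ℝ) (hφc : Continuous φ) (hφpos : ∀ x, 0 < φ x) :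
    ∃ K : lp (fun _ : Words k A => ℂ) 2 →L[ℂ] lp (fun _ : Words k A => ℂ) 2,
      (∀ (ξ : lp (fun _ : Words k A => ℂ) 2) (w : Words k A),
        (K ξ) w =
          (Real.exp (-(birk k A φ (wordLen k A w) (wpt k A xp hxp w))) : ℂ) * ξ w) ∧
      IsCompactOperator K := by
  have hdecay : Tendsto
      (fun w => (Real.exp (-(birk k A φ (wordLen k A w) (wpt k A xp hxp w))) : ℂ))
      cofinite (𝓝 0) := by
    rw [← Complex.ofReal_zero]
    exact (Complex.continuous_ofReal.tendsto 0).comp <|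
      Real.tendsto_exp_neg_atTop_nhds_zero.comp <|
        tendsto_birk_atTop hφc hφpos (tendsto_wordLen_cofinite k A) (wpt k A xp hxp)
  let a : lp (fun _ : Words k A => ℂ) ∞ :=
    ⟨_, memℓp_infty hdecay.norm.bddAbove_range_of_cofinite⟩
  exact ⟨lp.diagonal a, fun ξ w => rfl, lp.isCompactOperator_diagonal hdecay⟩

theorem stmt1 (k : ℕ) (hk : 1 ≤ k) (A : Matrix (Fin k) (Fin k) ℕ)
    (hA : ZeroOne k A) (hAper : Aperiodic k A)
    (xp : Fin k → ShiftSpace k A) (hxp : ∀ j : Fin k, A j ((xp j).1 0) = 1)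
    (φ : ShiftSpace k A → ℝ) (hφc : Continuous φ) (hφpos : ∀ x, 0 < φ x) :
    ∃ K : lp (fun _ : Words k A => ℂ) 2 →L[ℂ] lp (fun _ : Words k A => ℂ) 2,
      (∀ (ξ : lp (fun _ : Words k A => ℂ) 2) (w : Words k A),
        (K ξ) w =
          (Real.exp (-(birk k A φ (wordLen k A w) (wpt k A xp hxp w))) : ℂ) * ξ w) ∧
      IsCompactOperator K :=
  stmt1_general k A xp hxp φ hφc hφpos

end SpectralGibbs
end

section
/- (Ruelle–Perron–Frobenius theorem, uniqueness/simplicity part.) Let α > 0 and let ψ : Σ_A⁺ → ℝ be α-Hölder, and suppose λ > 0 and h : Σ_A⁺ → ℝ is strictly positive, α-Hölder with L_ψ h = λ h, and ν is a Borel probability measure with ∫ L_ψ g dν = λ ∫ g dν for all continuous g. If λ' > 0 and h' : Σ_A⁺ → ℝ is strictly positive, α-Hölder with L_ψ h' = λ' h', then λ' = λ and h' = c·h for some constant c > 0. -/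
/-!
Integrating the eigen-equation of `h'` against the conformal measure `ν` gives `λ' = λ`.
With `c = min (h' / h)`, the function `g = h' - c h` is then a nonnegative continuous
eigenfunction of `L_ψ` vanishing at some point `x₀`. Since `L_ψ` has positive weights, `g`
vanishes at every `σ`-preimage of a zero, hence on the whole backward orbit of `x₀`, which
aperiodicity makes dense; so `g = 0`.
-/

open scoped BigOperators Classical
open Filter Topology MeasureTheory

namespace SpectralGibbs

lemma _root_.PiNat.hasBasis_nhds_cylinder {E : ℕ → Type*} [∀ n, TopologicalSpace (E n)]
    [∀ n, DiscreteTopology (E n)] (x : ∀ n, E n) :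
    (𝓝 x).HasBasis (fun _ : ℕ => True) (PiNat.cylinder x) := by
  refine ⟨fun U => ⟨fun hU => ?_, fun ⟨m, _, hm⟩ => ?_⟩⟩
  · obtain ⟨_, ⟨y, m, rfl⟩, hx, hU⟩ := (PiNat.isTopologicalBasis_cylinders E).mem_nhds_iff.1 hU
    exact ⟨m, trivial, by rwa [PiNat.mem_cylinder_iff_eq.1 hx]⟩
  · exact mem_of_superset ((PiNat.isOpen_cylinder E x m).mem_nhds (PiNat.self_mem_cylinder x m)) hm

variable {k : ℕ} {A : Matrix (Fin k) (Fin k) ℕ}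

lemma isClosed_setOf_forall_apply_eq_one :
    IsClosed {x : ℕ → Fin k | ∀ m, A (x m) (x (m + 1)) = 1} := by
  simp only [Set.ofPred_forall]
  refine isClosed_iInter fun m => ?_
  change IsClosed ((fun x : ℕ → Fin k => (x m, x (m + 1))) ⁻¹' {p : Fin k × Fin k | A p.1 p.2 = 1})
  exact (isClosed_discrete _).preimage (by fun_prop)

instance : CompactSpace (ShiftSpace k A) :=
  isCompact_iff_compactSpace.mp isClosed_setOf_forall_apply_eq_one.isCompact

lemma hasBasis_nhds_cylinder (z : ShiftSpace k A) :
    (𝓝 z).HasBasis (fun _ : ℕ => True) fun m => Subtype.val ⁻¹' PiNat.cylinder z.1 m :=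
  Topology.IsInducing.subtypeVal.basis_nhds (PiNat.hasBasis_nhds_cylinder z.1)

lemma dist'_le_of_forall_lt_eq {m : ℕ} {x y : ShiftSpace k A} (hxy : ∀ t < m, x.1 t = y.1 t) :
    dist' k A x y ≤ (2 : ℝ)⁻¹ ^ m := by
  unfold dist'
  split_ifs with hne
  · positivity
  · have hdiff : {t | x.1 t ≠ y.1 t}.Nonempty := by
      by_contra hdiff
      exact hne (Subtype.ext (funext fun t => not_not.1 fun h => hdiff ⟨t, h⟩))
    exact pow_le_pow_of_le_one (by norm_num) (by norm_num)
      (le_csInf hdiff fun t ht => not_lt.1 fun h => ht (hxy t h))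

lemma IsHolder.continuous {α : ℝ} (hα : 0 < α) {f : ShiftSpace k A → ℝ}
    (hf : IsHolder k A α f) : Continuous f := by
  obtain ⟨C, hC⟩ := hf
  have hr : (2 : ℝ)⁻¹ ^ α < 1 := Real.rpow_lt_one (by norm_num) (by norm_num) hα
  have hlim : Tendsto (fun m : ℕ => max C 0 * ((2 : ℝ)⁻¹ ^ α) ^ m) atTop (𝓝 0) := by
    simpa using (tendsto_pow_atTop_nhds_zero_of_lt_one (by positivity) hr).const_mul (max C 0)
  refine continuous_iff_continuousAt.2 fun z =>
    ((hasBasis_nhds_cylinder z).tendsto_iff Metric.nhds_basis_ball).2 fun ε hε => ?_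
  obtain ⟨m, hm⟩ := (hlim.eventually (gt_mem_nhds hε)).exists
  refine ⟨m, trivial, fun y hy => ?_⟩
  have hdist : 0 ≤ dist' k A y z := by unfold dist'; split_ifs <;> positivity
  rw [Metric.mem_ball, Real.dist_eq]
  calc |f y - f z| ≤ C * dist' k A y z ^ α := hC y z
    _ ≤ max C 0 * ((2 : ℝ)⁻¹ ^ m) ^ α :=
        mul_le_mul (le_max_left _ _) (Real.rpow_le_rpow hdist
          (dist'_le_of_forall_lt_eq (PiNat.mem_cylinder_iff.1 hy)) hα.le)
          (Real.rpow_nonneg hdist α) (le_max_right _ _)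
    _ = max C 0 * ((2 : ℝ)⁻¹ ^ α) ^ m := by rw [Real.rpow_pow_comm (by norm_num)]
    _ < ε := hm

lemma shift_cons (i : Fin k) (x : ShiftSpace k A) (h : A i (x.1 0) = 1) :
    shift k A (cons k A i x h) = x :=
  rfl

lemma cons_shift (y : ShiftSpace k A) : cons k A (y.1 0) (shift k A y) (y.2 0) = y := by
  apply Subtype.ext
  funext m
  cases m <;> rfl

lemma exists_head_eq_shift_iterate_eq (hA : ZeroOne k A) {n : ℕ} {i : Fin k} {x : ShiftSpace k A}
    (h : 0 < (A ^ n) i (x.1 0)) : ∃ y : ShiftSpace k A, y.1 0 = i ∧ (shift k A)^[n] y = x := by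
  induction n generalizing i with
  | zero =>
    rw [pow_zero, Matrix.one_apply] at h
    split_ifs at h with hix
    exacts [⟨x, hix.symm, rfl⟩, absurd h (lt_irrefl 0)]
  | succ n ih =>
    rw [pow_succ', Matrix.mul_apply] at h
    obtain ⟨l, -, hl⟩ := Finset.exists_lt_of_sum_lt (f := fun _ => 0) (by simpa using h)
    have hil : A i l = 1 := (hA i l).resolve_left (left_ne_zero_of_mul hl.ne')
    obtain ⟨y, hy0, hy⟩ := ih (pos_of_mul_pos_right hl (Nat.zero_le _))
    exact ⟨cons k A i y (hy0 ▸ hil), rfl, by rw [Function.iterate_succ_apply, shift_cons, hy]⟩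

lemma exists_shift_iterate_eq_of_head_eq (z y₁ : ShiftSpace k A) (m : ℕ) (h : y₁.1 0 = z.1 m) :
    ∃ y : ShiftSpace k A, (shift k A)^[m] y = y₁ ∧ ∀ t ≤ m, y.1 t = z.1 t := by
  induction m generalizing z with
  | zero => exact ⟨y₁, rfl, fun t ht => by rwa [Nat.le_zero.1 ht]⟩
  | succ m ih =>
    obtain ⟨y, hy, hyz⟩ := ih (shift k A z) h
    refine ⟨cons k A (z.1 0) y (by rw [hyz 0 m.zero_le]; exact z.2 0), ?_, ?_⟩
    · rw [Function.iterate_succ_apply, shift_cons, hy]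
    · rintro (_ | t) ht
      · rfl
      · exact hyz t (by omega)

lemma dense_setOf_shift_iterate_eq (hA : ZeroOne k A) (hAper : Aperiodic k A)
    (x₀ : ShiftSpace k A) : Dense {y | ∃ n, (shift k A)^[n] y = x₀} := by
  obtain ⟨n, -, hpos⟩ := hAper
  refine fun z => (mem_closure_iff_nhds_basis (hasBasis_nhds_cylinder z)).2 fun m _ => ?_
  obtain ⟨y₁, hy₁0, hy₁⟩ := exists_head_eq_shift_iterate_eq hA (hpos (z.1 m) (x₀.1 0))
  obtain ⟨y, hy, hyz⟩ := exists_shift_iterate_eq_of_head_eq z y₁ m hy₁0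
  exact ⟨y, ⟨n + m, by rw [Function.iterate_add_apply, hy, hy₁]⟩,
    PiNat.mem_cylinder_iff.2 fun t ht => hyz t ht.le⟩

lemma transfer_sub_const_mul (ψ f g : ShiftSpace k A → ℝ) (c : ℝ) (x : ShiftSpace k A) :
    transfer k A ψ (fun y => f y - c * g y) x = transfer k A ψ f x - c * transfer k A ψ g x := by
  simp only [transfer, Finset.mul_sum, ← Finset.sum_sub_distrib]
  refine Finset.sum_congr rfl fun i _ => ?_
  split_ifs
  · simp only [smul_eq_mul]
    ring
  · simp

lemma apply_cons_eq_zero_of_transfer_eq_zero {ψ g : ShiftSpace k A → ℝ} (hg : ∀ x, 0 ≤ g x)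
    {x : ShiftSpace k A} (hx : transfer k A ψ g x = 0) (i : Fin k) (hi : A i (x.1 0) = 1) :
    g (cons k A i x hi) = 0 := by
  have hterm := (Finset.sum_eq_zero_iff_of_nonneg fun j _ => ?_).1 hx i (Finset.mem_univ i)
  · rw [dif_pos hi, smul_eq_mul] at hterm
    exact (mul_eq_zero.1 hterm).resolve_left (Real.exp_pos _).ne'
  · split_ifs
    exacts [smul_nonneg (Real.exp_pos _).le (hg _), le_rfl]

lemma apply_eq_zero_of_shift_iterate_eq {ψ g : ShiftSpace k A → ℝ} {lam : ℝ}
    (hg : ∀ x, 0 ≤ g x) (heig : ∀ x, transfer k A ψ g x = lam * g x)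
    {x₀ : ShiftSpace k A} (hx₀ : g x₀ = 0) {n : ℕ} {y : ShiftSpace k A}
    (hy : (shift k A)^[n] y = x₀) : g y = 0 := by
  induction n generalizing y with
  | zero => rwa [← hy] at hx₀
  | succ n ih =>
    have hσy : g (shift k A y) = 0 := ih (by rwa [← Function.iterate_succ_apply])
    rw [← cons_shift y]
    exact apply_cons_eq_zero_of_transfer_eq_zero hg (by rw [heig, hσy, mul_zero]) _ _

lemma eq_zero_of_transfer_eq_mul_of_nonneg (hA : ZeroOne k A) (hAper : Aperiodic k A)
    {ψ g : ShiftSpace k A → ℝ} {lam : ℝ} (hgc : Continuous g) (hg : ∀ x, 0 ≤ g x)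
    (heig : ∀ x, transfer k A ψ g x = lam * g x) {x₀ : ShiftSpace k A} (hx₀ : g x₀ = 0) :
    g = 0 :=
  hgc.ext_on (dense_setOf_shift_iterate_eq hA hAper x₀) continuous_const
    fun _ ⟨_, hy⟩ => apply_eq_zero_of_shift_iterate_eq hg heig hx₀ hy

lemma eq_of_transfer_eq_mul_of_pos {ν : Measure (ShiftSpace k A)} [IsProbabilityMeasure ν]
    {ψ f : ShiftSpace k A → ℝ} {lam lam' : ℝ}
    (hν : ∀ g : ShiftSpace k A → ℝ, Continuous g →
      ∫ x, transfer k A ψ g x ∂ν = lam * ∫ x, g x ∂ν)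
    (hfc : Continuous f) (hf : ∀ x, 0 < f x) (heig : ∀ x, transfer k A ψ f x = lam' * f x) :
    lam' = lam := by
  have hint : 0 < ∫ x, f x ∂ν := by
    rw [integral_pos_iff_support_of_nonneg (fun x => (hf x).le)
      (hfc.integrable_of_hasCompactSupport (HasCompactSupport.of_compactSpace f)),
      Function.support_eq_univ fun x => (hf x).ne', measure_univ]
    exact one_pos
  refine mul_right_cancel₀ hint.ne' ?_
  rw [← hν f hfc, ← integral_const_mul]
  simp only [heig]

theorem stmt4_general (k : ℕ) (A : Matrix (Fin k) (Fin k) ℕ)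
    (hA : ZeroOne k A) (hAper : Aperiodic k A)
    (α : ℝ) (hα : 0 < α) (ψ : ShiftSpace k A → ℝ)
    (lam : ℝ) (h : ShiftSpace k A → ℝ)
    (hhpos : ∀ x, 0 < h x) (hhH : IsHolder k A α h)
    (heig : ∀ x, transfer k A ψ h x = lam * h x)
    (ν : Measure (ShiftSpace k A)) (hν : IsProbabilityMeasure ν)
    (hνeig : ∀ g : ShiftSpace k A → ℝ, Continuous g →
      ∫ x, transfer k A ψ g x ∂ν = lam * ∫ x, g x ∂ν)
    (lam' : ℝ) (h' : ShiftSpace k A → ℝ)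
    (hh'pos : ∀ x, 0 < h' x) (hh'H : IsHolder k A α h')
    (heig' : ∀ x, transfer k A ψ h' x = lam' * h' x) :
    lam' = lam ∧ ∃ c : ℝ, 0 < c ∧ ∀ x, h' x = c * h x := by
  have := nonempty_of_isProbabilityMeasure ν
  have hhc := hhH.continuous hα
  have hh'c := hh'H.continuous hα
  obtain rfl : lam' = lam := eq_of_transfer_eq_mul_of_pos hνeig hh'c hh'pos heig'
  obtain ⟨x₀, hx₀⟩ := (hh'c.div hhc fun x => (hhpos x).ne').exists_forall_le
    (by rw [cocompact_eq_bot]; exact tendsto_bot)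
  set c := h' x₀ / h x₀
  have hdiff : (fun x => h' x - c * h x) = 0 :=
    eq_zero_of_transfer_eq_mul_of_nonneg hA hAper (hh'c.sub (continuous_const.mul hhc))
      (fun x => sub_nonneg.2 ((le_div_iff₀ (hhpos x)).1 (hx₀ x)))
      (fun x => by rw [transfer_sub_const_mul, heig, heig']; ring)
      (x₀ := x₀) (by simp only [c, div_mul_cancel₀ _ (hhpos x₀).ne', sub_self])
  exact ⟨rfl, c, div_pos (hh'pos x₀) (hhpos x₀), fun x => sub_eq_zero.1 (congrFun hdiff x)⟩

theorem stmt4 (k : ℕ) (hk : 1 ≤ k) (A : Matrix (Fin k) (Fin k) ℕ)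
    (hA : ZeroOne k A) (hAper : Aperiodic k A)
    (α : ℝ) (hα : 0 < α) (ψ : ShiftSpace k A → ℝ) (hψ : IsHolder k A α ψ)
    (lam : ℝ) (hlam : 0 < lam) (h : ShiftSpace k A → ℝ)
    (hhpos : ∀ x, 0 < h x) (hhH : IsHolder k A α h)
    (heig : ∀ x, transfer k A ψ h x = lam * h x)
    (ν : Measure (ShiftSpace k A)) (hν : IsProbabilityMeasure ν)
    (hνeig : ∀ g : ShiftSpace k A → ℝ, Continuous g →
      ∫ x, transfer k A ψ g x ∂ν = lam * ∫ x, g x ∂ν)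
    (lam' : ℝ) (hlam' : 0 < lam') (h' : ShiftSpace k A → ℝ)
    (hh'pos : ∀ x, 0 < h' x) (hh'H : IsHolder k A α h')
    (heig' : ∀ x, transfer k A ψ h' x = lam' * h' x) :
    lam' = lam ∧ ∃ c : ℝ, 0 < c ∧ ∀ x, h' x = c * h x :=
  stmt4_general k A hA hAper α hα ψ lam h hhpos hhH heig ν hν hνeig lam' h' hh'pos hh'H heig'

end SpectralGibbs
end

section
/- (Strict monotonicity of the leading eigenvalue.) Let φ : Σ_A⁺ → ℝ be continuous with φ(x) > 0 for all x. Suppose s < t are real numbers and that λ_s, λ_t > 0 admit strictly positive continuous functions h_s, h_t with L_{−sφ} h_s = λ_s h_s and L_{−tφ} h_t = λ_t h_t. Then λ_t ≤ e^{−(t−s)·inf φ} λ_s; in particular λ_t < λ_s. -/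
open scoped BigOperators Classical
open Filter Topology MeasureTheory

namespace SpectralGibbs

/-! At a point `x₀` where `h_t / h_s` is maximal, each term of `L_{-tφ} h_t (x₀)` is at most
`e^{-(t-s) inf φ} (h_t / h_s)(x₀)` times the corresponding term of `L_{-sφ} h_s (x₀)`, and the
eigenvalue equations turn this into `λ_t ≤ e^{-(t-s) inf φ} λ_s`. Compactness of `Σ_A⁺` provides
`x₀` and `inf φ > 0`. -/

theorem isClosed_shiftSpace (k : ℕ) (A : Matrix (Fin k) (Fin k) ℕ) :
    IsClosed {x : ℕ → Fin k | ∀ m, A (x m) (x (m + 1)) = 1} := by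
  simp only [Set.ofPred_forall]
  exact isClosed_iInter fun m =>
    (isClosed_discrete {p : Fin k × Fin k | A p.1 p.2 = 1}).preimage
      (f := fun x : ℕ → Fin k => (x m, x (m + 1)))
      ((continuous_apply m).prodMk (continuous_apply (m + 1)))

instance inst_s9 (k : ℕ) (A : Matrix (Fin k) (Fin k) ℕ) : CompactSpace (ShiftSpace k A) :=
  isCompact_iff_compactSpace.mp (isClosed_shiftSpace k A).isCompact

theorem exists_eq_one_of_aperiodic {k : ℕ} {A : Matrix (Fin k) (Fin k) ℕ}
    (hA : ZeroOne k A) (hAper : Aperiodic k A) (i : Fin k) : ∃ j, A i j = 1 := by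
  obtain ⟨n, hn, hpos⟩ := hAper
  obtain ⟨n, rfl⟩ := Nat.exists_eq_add_of_le' hn
  have hsum : ∑ j, A i j * (A ^ n) j i ≠ 0 := by
    rw [← Matrix.mul_apply, ← pow_succ']
    exact (hpos i i).ne'
  obtain ⟨j, -, hj⟩ := Finset.exists_ne_zero_of_sum_ne_zero hsum
  exact ⟨j, (hA i j).resolve_left (left_ne_zero_of_mul hj)⟩

theorem nonempty_shiftSpace {k : ℕ} {A : Matrix (Fin k) (Fin k) ℕ} (i : Fin k)
    (hsucc : ∀ i, ∃ j, A i j = 1) : Nonempty (ShiftSpace k A) := by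
  choose next hnext using hsucc
  exact ⟨⟨fun m => next^[m] i, fun m => by
    show A (next^[m] i) (next^[m + 1] i) = 1
    rw [Function.iterate_succ_apply']
    exact hnext _⟩⟩

theorem iInf_pos_of_continuous {X : Type*} [TopologicalSpace X] [CompactSpace X] [Nonempty X]
    {f : X → ℝ} (hf : Continuous f) (hpos : ∀ x, 0 < f x) : 0 < ⨅ x, f x := by
  obtain ⟨x, hx⟩ := (isCompact_range hf).sInf_mem (Set.range_nonempty f)
  show 0 < sInf (Set.range f)
  exact hx ▸ hpos x

section Transfer

variable {k : ℕ} {A : Matrix (Fin k) (Fin k) ℕ}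

theorem transfer_le_transfer {ψ₁ ψ₂ g₁ g₂ : ShiftSpace k A → ℝ}
    (h : ∀ y, Real.exp (ψ₁ y) * g₁ y ≤ Real.exp (ψ₂ y) * g₂ y) (x : ShiftSpace k A) :
    transfer k A ψ₁ g₁ x ≤ transfer k A ψ₂ g₂ x := by
  refine Finset.sum_le_sum fun i _ => ?_
  split_ifs
  exacts [h _, le_rfl]

theorem transfer_const_mul (ψ g : ShiftSpace k A → ℝ) (c : ℝ) (x : ShiftSpace k A) :
    transfer k A ψ (fun y => c * g y) x = c * transfer k A ψ g x := by
  rw [transfer, transfer, Finset.mul_sum]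
  refine Finset.sum_congr rfl fun i _ => ?_
  split_ifs
  · simp only [smul_eq_mul]
    ring
  · rw [mul_zero]

theorem eigenvalue_le_of_exp_le [Nonempty (ShiftSpace k A)]
    {ψ₁ ψ₂ g₁ g₂ : ShiftSpace k A → ℝ} {lam₁ lam₂ c : ℝ}
    (hψ : ∀ y, Real.exp (ψ₁ y) ≤ c * Real.exp (ψ₂ y))
    (hg₁ : ∀ x, 0 < g₁ x) (hg₂ : ∀ x, 0 < g₂ x) (hg₁c : Continuous g₁) (hg₂c : Continuous g₂)
    (heig₁ : ∀ x, transfer k A ψ₁ g₁ x = lam₁ * g₁ x)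
    (heig₂ : ∀ x, transfer k A ψ₂ g₂ x = lam₂ * g₂ x) :
    lam₁ ≤ c * lam₂ := by
  obtain ⟨x₀, hx₀⟩ := (hg₁c.div hg₂c fun x => (hg₂ x).ne').exists_forall_ge
    (by rw [Filter.cocompact_eq_bot]; exact tendsto_bot)
  set M := g₁ x₀ / g₂ x₀ with hM
  have hpointwise : ∀ y, Real.exp (ψ₁ y) * g₁ y ≤ Real.exp (ψ₂ y) * (c * M * g₂ y) := by
    intro y
    have hg₁y : g₁ y ≤ M * g₂ y := (div_le_iff₀ (hg₂ y)).mp (hx₀ y)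
    calc Real.exp (ψ₁ y) * g₁ y ≤ c * Real.exp (ψ₂ y) * g₁ y :=
          mul_le_mul_of_nonneg_right (hψ y) (hg₁ y).le
      _ ≤ c * Real.exp (ψ₂ y) * (M * g₂ y) :=
          mul_le_mul_of_nonneg_left hg₁y ((Real.exp_pos _).le.trans (hψ y))
      _ = Real.exp (ψ₂ y) * (c * M * g₂ y) := by ring
  have heval : lam₁ * g₁ x₀ ≤ c * lam₂ * g₁ x₀ := by
    calc lam₁ * g₁ x₀ = transfer k A ψ₁ g₁ x₀ := (heig₁ x₀).symm
      _ ≤ transfer k A ψ₂ (fun y => c * M * g₂ y) x₀ := transfer_le_transfer hpointwise x₀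
      _ = c * lam₂ * (M * g₂ x₀) := by rw [transfer_const_mul, heig₂]; ring
      _ = c * lam₂ * g₁ x₀ := by rw [hM, div_mul_cancel₀ _ (hg₂ x₀).ne']
  exact le_of_mul_le_mul_right heval (hg₁ x₀)

end Transfer

theorem stmt9_general (k : ℕ) (hk : 1 ≤ k) (A : Matrix (Fin k) (Fin k) ℕ)
    (hA : ZeroOne k A) (hAper : Aperiodic k A)
    (φ : ShiftSpace k A → ℝ) (hφc : Continuous φ) (hφpos : ∀ x, 0 < φ x)
    (s t : ℝ) (hst : s < t)
    (lams lamt : ℝ) (hlams : 0 < lams)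
    (hs ht : ShiftSpace k A → ℝ)
    (hhs : ∀ x, 0 < hs x) (hht : ∀ x, 0 < ht x)
    (hhsc : Continuous hs) (hhtc : Continuous ht)
    (heigs : ∀ x, transfer k A (fun y => -(s * φ y)) hs x = lams * hs x)
    (heigt : ∀ x, transfer k A (fun y => -(t * φ y)) ht x = lamt * ht x) :
    lamt ≤ Real.exp (-((t - s) * ⨅ x : ShiftSpace k A, φ x)) * lams ∧
      lamt < lams := by
  have := nonempty_shiftSpace ⟨0, hk⟩ (exists_eq_one_of_aperiodic hA hAper)
  set m := ⨅ x, φ x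
  have hm : 0 < m := iInf_pos_of_continuous hφc hφpos
  have hφm : ∀ y, m ≤ φ y := fun y => ciInf_le (isCompact_range hφc).bddBelow y
  have hle : lamt ≤ Real.exp (-((t - s) * m)) * lams := by
    refine eigenvalue_le_of_exp_le (fun y => ?_) hht hhs hhtc hhsc heigt heigs
    rw [← Real.exp_add, Real.exp_le_exp]
    nlinarith [hφm y]
  have hc : Real.exp (-((t - s) * m)) < 1 := Real.exp_lt_one_iff.mpr (by nlinarith)
  exact ⟨hle, hle.trans_lt (mul_lt_of_lt_one_left hlams hc)⟩

theorem stmt9 (k : ℕ) (hk : 1 ≤ k) (A : Matrix (Fin k) (Fin k) ℕ)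
    (hA : ZeroOne k A) (hAper : Aperiodic k A)
    (φ : ShiftSpace k A → ℝ) (hφc : Continuous φ) (hφpos : ∀ x, 0 < φ x)
    (s t : ℝ) (hst : s < t)
    (lams lamt : ℝ) (hlams : 0 < lams) (hlamt : 0 < lamt)
    (hs ht : ShiftSpace k A → ℝ)
    (hhs : ∀ x, 0 < hs x) (hht : ∀ x, 0 < ht x)
    (hhsc : Continuous hs) (hhtc : Continuous ht)
    (heigs : ∀ x, transfer k A (fun y => -(s * φ y)) hs x = lams * hs x)
    (heigt : ∀ x, transfer k A (fun y => -(t * φ y)) ht x = lamt * ht x) :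
    lamt ≤ Real.exp (-((t - s) * ⨅ x : ShiftSpace k A, φ x)) * lams ∧
      lamt < lams :=
  stmt9_general k hk A hA hAper φ hφc hφpos s t hst lams lamt hlams hs ht hhs hht hhsc hhtc heigs
    heigt

end SpectralGibbs
end
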